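/- Let G=(V,E) be a contextuality scenario and (A_x)_{x∈V} a positive operator representation of G on a finite-dimensional complex Hilbert space H. If there exist a complex Hilbert space K, a linear isometry V : H → K, and a projective representation (P_x)_{x∈V} of G on K with pairwise commuting entries such that A_x = V* P_x V for all x ∈ V, then there exist a finite-dimensional complex Hilbert space K', a linear isometry V' : H → K', and a projective representation (P'_x)_{x∈V} of G on K' with pairwise commuting entries such that A_x = V'* P'_x V' for all x ∈ V. -/
import Mathlib


noncomputable section

structure HilbertC where
  carrier : Type
  [normed : NormedAddCommGroup carrier]
  [ips : InnerProductSpace ℂ carrier]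
  [complete : CompleteSpace carrier]

attribute [instance] HilbertC.normed HilbertC.ips HilbertC.complete

/-- A positive operator representation of the hypergraph with edge set `E`. -/
def IsPOR {V : Type} [Fintype V] (E : Finset (Finset V)) {H : Type}
    [NormedAddCommGroup H] [InnerProductSpace ℂ H] [CompleteSpace H]
    (A : V → H →L[ℂ] H) : Prop :=
  (∀ x, (A x).IsPositive) ∧ ∀ e ∈ E, ∑ x ∈ e, A x = 1

/-- A projective representation of the hypergraph with edge set `E`. -/
def IsPR {V : Type} [Fintype V] (E : Finset (Finset V)) {H : Type}
    [NormedAddCommGroup H] [InnerProductSpace ℂ H] [CompleteSpace H]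
    (A : V → H →L[ℂ] H) : Prop :=
  (∀ x, IsSelfAdjoint (A x) ∧ IsIdempotentElem (A x)) ∧ ∀ e ∈ E, ∑ x ∈ e, A x = 1

/-- The POR `A` dilates to a projective representation. -/
def DilatesToPR {V : Type} [Fintype V] (E : Finset (Finset V)) {H : Type}
    [NormedAddCommGroup H] [InnerProductSpace ℂ H] [CompleteSpace H]
    (A : V → H →L[ℂ] H) : Prop :=
  ∃ (K : HilbertC) (B : V → K.carrier →L[ℂ] K.carrier) (Vi : H →L[ℂ] K.carrier),
    IsPR E B ∧ Isometry Vi ∧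
    ∀ x, A x = (ContinuousLinearMap.adjoint Vi).comp ((B x).comp Vi)

/-- The hypergraph `(V, E)` is dilating. -/
def Dilating (V : Type) [Fintype V] (E : Finset (Finset V)) : Prop :=
  ∀ (H : HilbertC) (A : V → H.carrier →L[ℂ] H.carrier), IsPOR E A → DilatesToPR E A

theorem stmt10 (V : Type) [Fintype V] [DecidableEq V]
    (E : Finset (Finset V)) (hEne : E.Nonempty) (hene : ∀ e ∈ E, e.Nonempty)
    (hcover : ∀ x : V, ∃ e ∈ E, x ∈ e)
    (H : Type) [NormedAddCommGroup H] [InnerProductSpace ℂ H] [CompleteSpace H]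
    [FiniteDimensional ℂ H]
    (A : V → H →L[ℂ] H) (hA : IsPOR E A)
    (hdil : ∃ (K : HilbertC) (Vi : H →L[ℂ] K.carrier)
        (P : V → K.carrier →L[ℂ] K.carrier),
        Isometry Vi ∧ IsPR E P ∧ (∀ x y, Commute (P x) (P y)) ∧
        ∀ x, A x = (ContinuousLinearMap.adjoint Vi).comp ((P x).comp Vi)) :
    ∃ K' : HilbertC, FiniteDimensional ℂ K'.carrier ∧
      ∃ (Vi' : H →L[ℂ] K'.carrier) (P' : V → K'.carrier →L[ℂ] K'.carrier),
        Isometry Vi' ∧ IsPR E P' ∧ (∀ x y, Commute (P' x) (P' y)) ∧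
        ∀ x, A x = (ContinuousLinearMap.adjoint Vi').comp ((P' x).comp Vi') := by
  classical
  obtain ⟨K, Vi, P, hVi, hP, hcomm, hAP⟩ := hdil
  -- the commuting products of the projections
  set q : Finset V → (K.carrier →L[ℂ] K.carrier) :=
    fun S => S.noncommProd P (fun a _ b _ _ => hcomm a b) with hqdef
  have hq_empty : q ∅ = 1 := Finset.noncommProd_empty _ _
  have hq_insert : ∀ (x : V) (S : Finset V), x ∉ S →
      q (insert x S) = P x * q S := by
    intro x S hx
    exact Finset.noncommProd_insert_of_notMem _ _ _ _ hx
  have hq : ∀ (x : V) (S : Finset V), P x * q S = q (insert x S) := by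
    intro x S
    by_cases hx : x ∈ S
    · rw [Finset.insert_eq_self.mpr hx]
      have h1 : q S = P x * q (S.erase x) := by
        conv_lhs => rw [← Finset.insert_erase hx]
        exact hq_insert x _ (Finset.notMem_erase x S)
      rw [h1, ← mul_assoc, (hP.1 x).2]
    · exact (hq_insert x S hx).symm
  -- the finite-dimensional invariant subspace
  set N : Finset V → Submodule ℂ K.carrier :=
    fun S => LinearMap.range (((q S).comp Vi : H →ₗ[ℂ] K.carrier)) with hNdef
  haveI hNfd : ∀ S, FiniteDimensional ℂ (N S) := fun S =>
    LinearMap.finiteDimensional_range _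
  set M : Submodule ℂ K.carrier := ⨆ S : Finset V, N S with hMdef
  haveI : FiniteDimensional ℂ M := Submodule.finiteDimensional_iSup N
  have hmapP : ∀ x : V, Submodule.map (P x : K.carrier →ₗ[ℂ] K.carrier) M ≤ M := by
    intro x
    rw [hMdef, Submodule.map_iSup]
    refine iSup_le fun S => ?_
    have hcompeq : ((P x : K.carrier →ₗ[ℂ] K.carrier).comp
        ((q S).comp Vi : H →ₗ[ℂ] K.carrier)) =
        ((q (insert x S)).comp Vi : H →ₗ[ℂ] K.carrier) := by
      rw [← hq x S]; rfl
    rw [hNdef, ← LinearMap.range_comp, hcompeq]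
    exact le_iSup N (insert x S)
  have hMinv : ∀ (x : V) (u : K.carrier), u ∈ M → P x u ∈ M := fun x u hu =>
    hmapP x ⟨u, hu, rfl⟩
  have hViMem : ∀ h : H, Vi h ∈ M := by
    intro h
    refine le_iSup N ∅ ⟨h, ?_⟩
    simp [hq_empty]
  -- the restricted maps
  set P' : V → (M →L[ℂ] M) := fun x =>
    LinearMap.toContinuousLinearMap
      ((P x : K.carrier →ₗ[ℂ] K.carrier).restrict (hMinv x)) with hP'def
  have hcoe : ∀ (x : V) (u : M), ((P' x u : K.carrier)) = P x (u : K.carrier) :=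
    fun x u => rfl
  set Vi' : H →L[ℂ] M := Vi.codRestrict M hViMem with hVi'def
  have hVcoe : ∀ h : H, ((Vi' h : K.carrier)) = Vi h := fun h => rfl
  refine ⟨⟨M⟩, inferInstance, Vi', P', ?_, ⟨?_, ?_⟩, ?_, ?_⟩
  · -- isometry
    refine AddMonoidHomClass.isometry_of_norm Vi' fun h => ?_
    have : ‖(Vi' h : K.carrier)‖ = ‖Vi h‖ := by rw [hVcoe]
    rw [show ‖Vi' h‖ = ‖(Vi' h : K.carrier)‖ from rfl, hVcoe]
    exact hVi.norm_map_of_map_zero (map_zero Vi) h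
  · -- self-adjoint and idempotent
    intro x
    constructor
    · rw [ContinuousLinearMap.isSelfAdjoint_iff_isSymmetric]
      intro u v
      have hsym := ((hP.1 x).1.isSymmetric : (P x : K.carrier →ₗ[ℂ] K.carrier).IsSymmetric)
      simp only [Submodule.coe_inner, hcoe]
      exact hsym _ _
    · refine ContinuousLinearMap.ext fun u => ?_
      refine Subtype.ext ?_
      show ((P' x (P' x u) : K.carrier)) = ((P' x u : K.carrier))
      rw [hcoe, hcoe]
      have := (hP.1 x).2
      calc P x (P x (u : K.carrier)) = (P x * P x) (u : K.carrier) := rfl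
        _ = P x (u : K.carrier) := by rw [this]
  · -- edges sum to one
    intro e he
    refine ContinuousLinearMap.ext fun u => ?_
    refine Subtype.ext ?_
    have h1 : (((∑ x ∈ e, P' x) u : M) : K.carrier)
        = ∑ x ∈ e, ((P' x u : M) : K.carrier) := by
      rw [ContinuousLinearMap.sum_apply]
      exact Submodule.coe_sum _ _ _
    rw [h1]
    simp only [hcoe]
    have h2 : ∑ x ∈ e, P x (u : K.carrier) = (∑ x ∈ e, P x) (u : K.carrier) :=
      (ContinuousLinearMap.sum_apply _ _ _).symm
    rw [h2, hP.2 e he]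
    rfl
  · -- commuting
    intro x y
    refine ContinuousLinearMap.ext fun u => ?_
    refine Subtype.ext ?_
    show ((P' x (P' y u) : K.carrier)) = ((P' y (P' x u) : K.carrier))
    rw [hcoe, hcoe, hcoe, hcoe]
    calc P x (P y (u : K.carrier)) = (P x * P y) (u : K.carrier) := rfl
      _ = (P y * P x) (u : K.carrier) := by rw [hcomm x y]
      _ = P y (P x (u : K.carrier)) := rfl
  · -- dilation identity
    intro x
    refine ContinuousLinearMap.ext fun h => ?_
    refine ext_inner_left ℂ fun v => ?_
    rw [hAP x]
    simp only [ContinuousLinearMap.comp_apply]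
    rw [ContinuousLinearMap.adjoint_inner_right, ContinuousLinearMap.adjoint_inner_right]
    rw [Submodule.coe_inner, hcoe, hVcoe, hVcoe]
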